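/- For every natural number N ≥ 1, the matrix inequality 2·W²_GHZ ⪰ W_GHZ holds, i.e. the Hermitian matrix ((3/2)·I − P₁ − P₂) − ((1/2)·I − |GHZ⟩⟨GHZ|) = I − P₁ − P₂ + |GHZ⟩⟨GHZ| is positive semidefinite, where P₁ = (I + σx^{⊗N})/2, P₂ = |0^N⟩⟨0^N| + |1^N⟩⟨1^N|, W²_GHZ = (3/4)·I − (P₁ + P₂)/2, W_GHZ = (1/2)·I − |GHZ⟩⟨GHZ|, and |GHZ⟩ = (|0^N⟩ + |1^N⟩)/√2. -/

import Mathlib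

open Matrix Complex ComplexOrder

noncomputable section

/-- Pauli X matrix. -/
def pX : Matrix (Fin 2) (Fin 2) ℂ := !![0, 1; 1, 0]

/-- N-fold Kronecker (tensor) power of a single-qubit operator. -/
def tensorPow (N : ℕ) (A : Matrix (Fin 2) (Fin 2) ℂ) :
    Matrix (Fin N → Fin 2) (Fin N → Fin 2) ℂ :=
  Matrix.of fun b c => ∏ j, A (b j) (c j)

/-- The all-zeros bit string, indexing `|0^N⟩`. -/
def zeros (N : ℕ) : Fin N → Fin 2 := fun _ => 0

/-- The all-ones bit string, indexing `|1^N⟩`. -/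
def ones (N : ℕ) : Fin N → Fin 2 := fun _ => 1

/-- The GHZ state `(|0^N⟩ + |1^N⟩)/√2`. -/
def ghz (N : ℕ) : (Fin N → Fin 2) → ℂ := fun b =>
  ((Real.sqrt 2 : ℂ))⁻¹ * ((if b = zeros N then 1 else 0) + (if b = ones N then 1 else 0))

/-- The rank-one projector `|ψ⟩⟨ψ|` of a vector `ψ`. -/
def proj (N : ℕ) (ψ : (Fin N → Fin 2) → ℂ) :
    Matrix (Fin N → Fin 2) (Fin N → Fin 2) ℂ :=
  Matrix.of fun b c => ψ b * (starRingEnd ℂ) (ψ c)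

/-- `P₁ = (I + σx^{⊗N})/2`. -/
def P1 (N : ℕ) : Matrix (Fin N → Fin 2) (Fin N → Fin 2) ℂ :=
  ((1 : ℂ) / 2) • ((1 : Matrix (Fin N → Fin 2) (Fin N → Fin 2) ℂ) + tensorPow N pX)

/-- `P₂ = |0^N⟩⟨0^N| + |1^N⟩⟨1^N|`. -/
def P2 (N : ℕ) : Matrix (Fin N → Fin 2) (Fin N → Fin 2) ℂ :=
  Matrix.single (zeros N) (zeros N) (1 : ℂ)
    + Matrix.single (ones N) (ones N) (1 : ℂ)

/-- The fidelity witness `W_GHZ = (1/2)·I − |GHZ⟩⟨GHZ|`. -/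
def Wghz (N : ℕ) : Matrix (Fin N → Fin 2) (Fin N → Fin 2) ℂ :=
  ((1 : ℂ) / 2) • (1 : Matrix (Fin N → Fin 2) (Fin N → Fin 2) ℂ) - proj N (ghz N)

/-- The two-setting witness `W²_GHZ = (3/4)·I − (P₁ + P₂)/2`. -/
def W2ghz (N : ℕ) : Matrix (Fin N → Fin 2) (Fin N → Fin 2) ℂ :=
  ((3 : ℂ) / 4) • (1 : Matrix (Fin N → Fin 2) (Fin N → Fin 2) ℂ)
    - ((1 : ℂ) / 2) • (P1 N + P2 N)

/-! `P₁` and `P₂` are orthogonal projections (`σx^{⊗N}` is a self-adjoint involution, and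
`|0^N⟩ ≠ |1^N⟩` once `N ≥ 1`). Since `σx^{⊗N}` swaps `|0^N⟩` and `|1^N⟩`, their product is
`P₁P₂ = |GHZ⟩⟨GHZ|`, which is self-adjoint, so `P₁` and `P₂` commute. Hence
`I − P₁ − P₂ + |GHZ⟩⟨GHZ| = I − (P₁ + P₂ − P₁P₂)` is again a projection, and projections are
positive semidefinite. The first claim is the same matrix, as `2·W²_GHZ − W_GHZ` expands to it. -/

open scoped MatrixOrder

lemma tensorPow_mul (N : ℕ) (A B : Matrix (Fin 2) (Fin 2) ℂ) :
    tensorPow N A * tensorPow N B = tensorPow N (A * B) := by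
  ext b c
  simp only [tensorPow, mul_apply, of_apply]
  rw [Finset.prod_univ_sum, Fintype.piFinset_univ]
  exact Finset.sum_congr rfl fun d _ => Finset.prod_mul_distrib.symm

lemma tensorPow_one (N : ℕ) : tensorPow N 1 = 1 := by
  ext b c
  simp [tensorPow, one_apply, Finset.prod_boole, funext_iff]

lemma conjTranspose_tensorPow (N : ℕ) (A : Matrix (Fin 2) (Fin 2) ℂ) :
    (tensorPow N A)ᴴ = tensorPow N Aᴴ := by
  ext b c
  simp [tensorPow, conjTranspose_apply, star_prod]

lemma pX_mul_self : pX * pX = 1 := by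
  ext i j
  fin_cases i <;> fin_cases j <;> simp [pX, mul_apply, Fin.sum_univ_two]

lemma conjTranspose_pX : pXᴴ = pX := by
  ext i j
  fin_cases i <;> fin_cases j <;> simp [pX]

-- On `Fin 2`, `Fin.rev` is the bit flip, so `Fin.rev ∘ b` is the complement of the bit string `b`.
lemma pX_apply (x y : Fin 2) : pX x y = if y = x.rev then 1 else 0 := by
  fin_cases x <;> fin_cases y <;> simp [pX]

lemma tensorPow_pX_apply (N : ℕ) (b c : Fin N → Fin 2) :
    tensorPow N pX b c = if c = Fin.rev ∘ b then 1 else 0 := by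
  simp only [tensorPow, of_apply, pX_apply, Fintype.prod_boole, funext_iff, Function.comp_apply]
  congr

lemma tensorPow_pX_mulVec_single (N : ℕ) (b : Fin N → Fin 2) :
    tensorPow N pX *ᵥ Pi.single b 1 = Pi.single (Fin.rev ∘ b) 1 := by
  ext c
  rw [mulVec_single_one, col_apply, tensorPow_pX_apply, Pi.single_apply]
  congr 1
  simp only [funext_iff, Function.comp_apply]
  exact propext (forall_congr' fun j => Fin.rev_eq_iff.symm.trans eq_comm)

lemma isStarProjection_half_smul_one_add {𝕜 R : Type*} [RCLike 𝕜] [Ring R] [StarRing R]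
    [Algebra 𝕜 R] [StarModule 𝕜 R] {u : R} (hu : IsSelfAdjoint u) (hu2 : u * u = 1) :
    IsStarProjection ((1 / 2 : 𝕜) • (1 + u)) where
  isIdempotentElem := by
    rw [IsIdempotentElem, smul_mul_smul_comm, add_mul, mul_add, mul_add, hu2]
    simp only [one_mul, mul_one]
    module
  isSelfAdjoint := by
    simp [IsSelfAdjoint, hu.star_eq]

lemma isStarProjection_single_one {n α : Type*} [DecidableEq n] [Fintype n] [Semiring α]
    [StarRing α] (i : n) : IsStarProjection (single i i (1 : α)) where
  isIdempotentElem := by rw [IsIdempotentElem, single_mul_single_same, mul_one]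
  isSelfAdjoint := by rw [IsSelfAdjoint, star_eq_conjTranspose, conjTranspose_single, star_one]

lemma zeros_ne_ones {N : ℕ} (hN : 0 < N) : zeros N ≠ ones N :=
  fun h => by simpa [zeros, ones] using congrFun h ⟨0, hN⟩

lemma rev_comp_zeros (N : ℕ) : Fin.rev ∘ zeros N = ones N := rfl

lemma rev_comp_ones (N : ℕ) : Fin.rev ∘ ones N = zeros N := rfl

lemma isStarProjection_P1 (N : ℕ) : IsStarProjection (P1 N) := by
  refine isStarProjection_half_smul_one_add ?_ ?_
  · rw [IsSelfAdjoint, star_eq_conjTranspose, conjTranspose_tensorPow, conjTranspose_pX]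
  · rw [tensorPow_mul, pX_mul_self, tensorPow_one]

lemma isStarProjection_P2 {N : ℕ} (hN : 0 < N) : IsStarProjection (P2 N) :=
  (isStarProjection_single_one _).add (isStarProjection_single_one _)
    (single_mul_single_of_ne _ _ _ _ (zeros_ne_ones hN) _)

lemma proj_eq_vecMulVec (N : ℕ) (ψ : (Fin N → Fin 2) → ℂ) : proj N ψ = vecMulVec ψ (star ψ) := rfl

lemma isSelfAdjoint_proj (N : ℕ) (ψ : (Fin N → Fin 2) → ℂ) : IsSelfAdjoint (proj N ψ) := by
  rw [IsSelfAdjoint, star_eq_conjTranspose, proj_eq_vecMulVec, conjTranspose_vecMulVec, star_star]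

lemma ghz_eq (N : ℕ) :
    ghz N = (Real.sqrt 2 : ℂ)⁻¹ • (Pi.single (zeros N) 1 + Pi.single (ones N) 1) := by
  ext b
  simp [ghz, Pi.single_apply]

lemma proj_ghz (N : ℕ) :
    proj N (ghz N) = (1 / 2 : ℂ) • vecMulVec (Pi.single (zeros N) 1 + Pi.single (ones N) 1)
      (Pi.single (zeros N) 1 + Pi.single (ones N) 1) := by
  have hstar (b : Fin N → Fin 2) : star (Pi.single b 1 : (Fin N → Fin 2) → ℂ) = Pi.single b 1 := by
    simp
  have hsqrt : (Real.sqrt 2 : ℂ)⁻¹ * star (Real.sqrt 2 : ℂ)⁻¹ = 1 / 2 := by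
    rw [star_inv₀, Complex.star_def, Complex.conj_ofReal, ← mul_inv, ← Complex.ofReal_mul,
      Real.mul_self_sqrt zero_le_two]
    norm_num
  rw [proj_eq_vecMulVec, ghz_eq, star_smul, star_add, hstar, hstar, smul_vecMulVec,
    vecMulVec_smul, smul_smul, hsqrt]

lemma P1_mul_P2 (N : ℕ) : P1 N * P2 N = proj N (ghz N) := by
  have hmul (b : Fin N → Fin 2) : (1 + tensorPow N pX) *ᵥ Pi.single b 1
      = Pi.single b 1 + Pi.single (Fin.rev ∘ b) 1 := by
    rw [add_mulVec, one_mulVec, tensorPow_pX_mulVec_single]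
  rw [P1, P2, single_eq_single_vecMulVec_single, single_eq_single_vecMulVec_single, smul_mul,
    mul_add, mul_vecMulVec, mul_vecMulVec, hmul, hmul, rev_comp_zeros, rev_comp_ones,
    add_comm (Pi.single (ones N) _), ← vecMulVec_add, proj_ghz]

lemma two_smul_W2ghz_sub_Wghz (N : ℕ) :
    (2 : ℂ) • W2ghz N - Wghz N = 1 - P1 N - P2 N + proj N (ghz N) := by
  rw [W2ghz, Wghz]
  module

theorem two_setting_witness_dominates (N : ℕ) (hN : 1 ≤ N) :
    ((2 : ℂ) • W2ghz N - Wghz N).PosSemidef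
    ∧ ((1 : Matrix (Fin N → Fin 2) (Fin N → Fin 2) ℂ)
        - P1 N - P2 N + proj N (ghz N)).PosSemidef := by
  have hP1 := isStarProjection_P1 N
  have hP2 := isStarProjection_P2 hN
  have hcomm : Commute (P1 N) (P2 N) := (hP1.isSelfAdjoint.commute_iff hP2.isSelfAdjoint).mpr
    (P1_mul_P2 N ▸ isSelfAdjoint_proj N (ghz N))
  have hpsd : (1 - P1 N - P2 N + proj N (ghz N)).PosSemidef := by
    rw [← P1_mul_P2, show (1 : Matrix _ _ ℂ) - P1 N - P2 N + P1 N * P2 N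
      = 1 - (P1 N + P2 N - P1 N * P2 N) by abel]
    exact (hP1.add_sub_mul_of_commute hcomm hP2).one_sub.nonneg.posSemidef
  exact ⟨two_smul_W2ghz_sub_Wghz N ▸ hpsd, hpsd⟩
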